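/- Let 𝒜 and ℬ be Grothendieck abelian categories, let π : 𝒜 → 𝒜/𝒮 and π' : ℬ → ℬ/𝒯 be Gabriel localizations with fully faithful right adjoints ω and ω'. Assume 𝒜 has enough projectives. Let F : 𝒜 → ℬ be an additive right exact functor such that π'(F(s)) ≅ 0 for every object s with π(s) ≅ 0, and such that L₁(π'∘F)(s) ≅ 0 for every object s with π(s) ≅ 0. Then the functor G := π'∘F∘ω : 𝒜/𝒮 → ℬ/𝒯 is right exact, i.e. it preserves finite colimits. -/

import Mathlib

/-
Write `H := F ⋙ π'`. The unit `η_X : X ⟶ ω (π X)` becomes invertible under `π`, so its kernel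
and cokernel lie in the kernel of `π`, where `H` and `L₁H` vanish. This forces `H η_X` to be
invertible. Factor `η_X` as an epimorphism followed by a monomorphism `I ⟶ M` with cokernel `Q`.
Right exactness inverts the epimorphism, whose kernel is `H`-null. The monomorphism goes to an
epimorphism since `H Q = 0`, and to a monomorphism: it is a pushout of `ker (P₀ ⟶ Q) ⟶ P₀` for a
projective `P₀ ⟶ Q`, which `H` keeps monic because `L₁H Q = 0`; `H` preserves pushouts, and in an
abelian category pushouts of monos are monos.
So `H ≅ π ⋙ ω ⋙ H`. As every diagram `K` in `𝒜/𝒮` is `π` applied to `K ⋙ ω`, right exactness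
of `π` and `H` passes to `ω ⋙ H`.
-/

open CategoryTheory CategoryTheory.Limits

universe v u

namespace CategoryTheory

namespace Adjunction

variable {C Q E : Type*} [Category* C] [Category* Q] [Category* E] {L : C ⥤ Q} {R : Q ⥤ C}

lemma preservesColimitsOfShape_of_comp (adj : L ⊣ R) [R.Full] [R.Faithful] {J : Type*}
    [Category* J] [HasColimitsOfShape J C] [PreservesColimitsOfShape J L] (G : Q ⥤ E)
    [PreservesColimitsOfShape J (L ⋙ G)] : PreservesColimitsOfShape J G where
  preservesColimit {K} := by
    have hc := colimit.isColimit (K ⋙ R)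
    have : PreservesColimit ((K ⋙ R) ⋙ L) G :=
      preservesColimit_of_preserves_colimit_cocone (isColimitOfPreserves L hc)
        (isColimitOfPreserves (L ⋙ G) hc)
    exact preservesColimit_of_iso_diagram G
      (K.associator R L ≪≫ K.isoWhiskerLeft (asIso adj.counit) ≪≫ K.rightUnitor)

lemma preservesFiniteColimits_of_comp (adj : L ⊣ R) [R.Full] [R.Faithful] [HasFiniteColimits C]
    [PreservesFiniteColimits L] (G : Q ⥤ E) [PreservesFiniteColimits (L ⋙ G)] :
    PreservesFiniteColimits G :=
  ⟨fun _ _ _ => adj.preservesColimitsOfShape_of_comp G⟩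

lemma preservesFiniteColimits_comp_of_isIso_map_unit (adj : L ⊣ R) [R.Full] [R.Faithful]
    [HasFiniteColimits C] [PreservesFiniteColimits L] (G : C ⥤ E) [PreservesFiniteColimits G]
    [∀ X, IsIso (G.map (adj.unit.app X))] : PreservesFiniteColimits (R ⋙ G) :=
  have : PreservesFiniteColimits (L ⋙ R ⋙ G) := preservesFiniteColimits_of_natIso
    (NatIso.ofComponents (fun X => asIso (G.map (adj.unit.app X))) (by
      intro X Y f
      dsimp
      rw [← G.map_comp, ← G.map_comp, adj.unit_naturality]))
  adj.preservesFiniteColimits_of_comp (R ⋙ G)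

end Adjunction

variable {C : Type*} [Category* C] [Abelian C]

lemma ShortComplex.Exact.mono_of_epi_of_fac {S : ShortComplex C} (hS : S.Exact) {T : C}
    {p : S.X₂ ⟶ T} [Epi p] (hp : S.f ≫ p = 0) {i : T ⟶ S.X₃} (hi : p ≫ i = S.g) : Mono i := by
  rw [Preadditive.mono_iff_cancel_zero]
  intro V x hx
  obtain ⟨V', ε, _, y, hy⟩ := surjective_up_to_refinements_of_epi p x
  obtain ⟨V'', ε', _, u, hu⟩ := hS.exact_up_to_refinements y (by
    rw [← hi, ← Category.assoc, ← hy, Category.assoc, hx, comp_zero])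
  have : (ε' ≫ ε) ≫ x = 0 := by
    rw [Category.assoc, hy, ← Category.assoc, hu, Category.assoc, hp, comp_zero]
  exact zero_of_epi_comp _ this

lemma ShortComplex.isPushout_of_isIso_τ₃ {S₁ S₂ : ShortComplex C} (φ : S₁ ⟶ S₂)
    (h₁ : S₁.Exact) [Epi S₁.g] (h₂ : S₂.ShortExact) [IsIso φ.τ₃] :
    IsPushout S₁.f φ.τ₁ φ.τ₂ S₂.f := by
  have := h₂.mono_f
  have := h₂.epi_g
  let T : ShortComplex C := ShortComplex.mk (biprod.lift S₁.f (-φ.τ₁)) (biprod.desc φ.τ₂ S₂.f)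
    (by simp [φ.comm₁₂])
  have hT : T.Exact := by
    rw [ShortComplex.exact_iff_exact_up_to_refinements]
    intro V (z : V ⟶ S₁.X₂ ⊞ S₂.X₁) (hz : z ≫ biprod.desc φ.τ₂ S₂.f = 0)
    obtain ⟨a, b, rfl⟩ : ∃ a b, z = biprod.lift a b :=
      ⟨z ≫ biprod.fst, z ≫ biprod.snd, by apply biprod.hom_ext <;> simp⟩
    have hab : a ≫ φ.τ₂ = -b ≫ S₂.f := eq_neg_of_add_eq_zero_left (by simpa using hz)
    have ha : a ≫ S₁.g = 0 := by
      rw [← cancel_mono φ.τ₃, Category.assoc, ← φ.comm₂₃, reassoc_of% hab]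
      simp
    obtain ⟨V', ε, _, c, hc⟩ := h₁.exact_up_to_refinements a ha
    refine ⟨V', ε, inferInstance, c, ?_⟩
    ext
    · simp [T, hc]
    · have hcb : c ≫ S₁.f ≫ φ.τ₂ = -(ε ≫ b ≫ S₂.f) := by
        rw [← reassoc_of% hc, hab]
        simp
      rw [← cancel_mono S₂.f]
      simp [T, φ.comm₁₂, hcb]
  have : Epi T.g := by
    rw [Preadditive.epi_iff_cancel_zero]
    intro Z u (hu : biprod.desc φ.τ₂ S₂.f ≫ u = 0)
    have hτ₂ : φ.τ₂ ≫ u = 0 := by simpa using biprod.inl ≫= hu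
    have hf : S₂.f ≫ u = 0 := by simpa using biprod.inr ≫= hu
    have : S₁.g ≫ φ.τ₃ ≫ h₂.exact.desc u hf = 0 := by
      rw [← φ.comm₂₃_assoc, h₂.exact.g_desc, hτ₂]
    rw [← h₂.exact.g_desc u hf, zero_of_epi_comp _ (zero_of_epi_comp _ this), comp_zero]
  have sq : CommSq S₁.f φ.τ₁ φ.τ₂ S₂.f := ⟨φ.comm₁₂.symm⟩
  exact ⟨sq, ⟨sq.isColimitEquivIsColimitCokernelCofork.symm hT.gIsCokernel⟩⟩

variable {D : Type*} [Category* D] [Abelian D] (H : C ⥤ D) [PreservesFiniteColimits H]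

lemma ProjectiveResolution.mono_map_kernel_ι [H.Additive] [HasProjectiveResolutions C] {Q : C}
    (P : ProjectiveResolution Q) (h : IsZero ((H.leftDerived 1).obj Q)) :
    Mono (H.map (kernel.ι (P.π.f 0))) := by
  have hexact : (((H.mapHomologicalComplex _).obj P.complex).sc' 2 1 0).Exact := by
    rw [← HomologicalComplex.exactAt_iff' _ 2 1 0 (by simp) (by simp),
      HomologicalComplex.exactAt_iff_isZero_homology]
    exact h.of_iso (P.isoLeftDerivedObj H 1).symm
  let f := kernel.lift (P.π.f 0) (P.complex.d 1 0) P.complex_d_comp_π_f_zero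
  have : Epi f := (ShortComplex.exact_iff_epi_kernel_lift _).1 P.exact₀
  -- `Epi (H.map f)` is passed by hand: the complex's `X 1` is `H.obj _` only up to unfolding
  refine @ShortComplex.Exact.mono_of_epi_of_fac _ _ _ _ hexact _ (H.map f) (H.map_epi f) ?_ _ ?_
  · have : P.complex.d 2 1 ≫ f = 0 := by
      rw [← cancel_mono (kernel.ι (P.π.f 0)), Category.assoc, kernel.lift_ι, zero_comp]
      exact P.complex.d_comp_d 2 1 0
    exact (H.map_comp _ _).symm.trans (by rw [this, H.map_zero]; rfl)
  · exact (H.map_comp _ _).symm.trans (by rw [kernel.lift_ι]; rfl)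

lemma ShortComplex.ShortExact.mono_map_f [H.Additive] [HasProjectiveResolutions C]
    {S : ShortComplex C} (hS : S.ShortExact) (h : IsZero ((H.leftDerived 1).obj S.X₃)) :
    Mono (H.map S.f) := by
  have := hS.mono_f
  have := hS.epi_g
  let P := projectiveResolution S.X₃
  let π₀ : P.complex.X 0 ⟶ S.X₃ := P.π.f 0
  let K := ShortComplex.mk (kernel.ι π₀) π₀ (kernel.condition _)
  have hK : K.Exact := K.exact_of_f_is_kernel (kernelIsKernel _)
  let l := Projective.factorThru π₀ S.g
  have hl : l ≫ S.g = π₀ := Projective.factorThru_comp _ _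
  let φ : K ⟶ S :=
    { τ₁ := hS.exact.lift (kernel.ι _ ≫ l) (by simp [hl])
      τ₂ := l
      τ₃ := 𝟙 _
      comm₁₂ := hS.exact.lift_f _ _
      comm₂₃ := by simp [K, hl] }
  have : Epi K.g := inferInstanceAs (Epi (P.π.f 0))
  have : Mono (H.map K.f) := P.mono_map_kernel_ι H h
  exact Abelian.mono_inr_of_isColimit _ _
    ((ShortComplex.isPushout_of_isIso_τ₃ φ hK hS).map H).isColimit

lemma Functor.isIso_map_of_epi_of_isZero_obj_kernel {X Y : C} (e : X ⟶ Y) [Epi e]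
    (h : IsZero (H.obj (Limits.kernel e))) : IsIso (H.map e) := by
  let S := ShortComplex.mk (kernel.ι e) e (kernel.condition e)
  have hS : (S.map H).Exact :=
    (S.exact_of_f_is_kernel (kernelIsKernel e)).map_of_epi_of_preservesCokernel H
      inferInstance inferInstance
  have : Mono (H.map e) := hS.mono_g (h.eq_of_src _ _)
  exact isIso_of_mono_of_epi _

lemma Functor.isIso_map_of_mono_of_isZero_obj_cokernel [H.Additive] [HasProjectiveResolutions C]
    {X Y : C} (m : X ⟶ Y) [Mono m] (h₀ : IsZero (H.obj (Limits.cokernel m)))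
    (h₁ : IsZero ((H.leftDerived 1).obj (Limits.cokernel m))) : IsIso (H.map m) := by
  let S := ShortComplex.mk m (cokernel.π m) (cokernel.condition m)
  have hS : S.ShortExact := { exact := S.exact_of_g_is_cokernel (cokernelIsCokernel m) }
  have := hS.mono_map_f H h₁
  have : Epi (H.map m) :=
    (hS.exact.map_of_epi_of_preservesCokernel H inferInstance inferInstance).epi_f
      (h₀.eq_of_tgt _ _)
  exact isIso_of_mono_of_epi _

lemma Functor.isIso_map_of_isZero_obj_kernel_of_isZero_obj_cokernel [H.Additive]
    [HasProjectiveResolutions C] {X Y : C} (f : X ⟶ Y) (hK : IsZero (H.obj (Limits.kernel f)))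
    (hQ : IsZero (H.obj (Limits.cokernel f)))
    (hQ₁ : IsZero ((H.leftDerived 1).obj (Limits.cokernel f))) : IsIso (H.map f) := by
  rw [← Abelian.image.fac f] at hK hQ hQ₁ ⊢
  have := H.isIso_map_of_epi_of_isZero_obj_kernel (Abelian.factorThruImage f)
    (hK.of_iso (H.mapIso (kernelCompMono _ _)).symm)
  have := H.isIso_map_of_mono_of_isZero_obj_cokernel (Abelian.image.ι f)
    (hQ.of_iso (H.mapIso (cokernelEpiComp _ _)).symm)
    (hQ₁.of_iso ((H.leftDerived 1).mapIso (cokernelEpiComp _ _)).symm)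
  rw [H.map_comp]
  infer_instance

lemma Functor.isZero_obj_kernel_of_isIso_map (G : C ⥤ D) [PreservesFiniteLimits G] {X Y : C}
    (f : X ⟶ Y) [IsIso (G.map f)] : IsZero (G.obj (Limits.kernel f)) :=
  (isZero_kernel_of_mono (G.map f)).of_iso (PreservesKernel.iso G f)

lemma Functor.isZero_obj_cokernel_of_isIso_map (G : C ⥤ D) [PreservesFiniteColimits G] {X Y : C}
    (f : X ⟶ Y) [IsIso (G.map f)] : IsZero (G.obj (Limits.cokernel f)) :=
  (isZero_cokernel_of_epi (G.map f)).of_iso (PreservesCokernel.iso G f)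

lemma Adjunction.isIso_map_unit_app_of_isZero {Q : Type*} [Category* Q] [Abelian Q] {L : C ⥤ Q}
    {R : Q ⥤ C} (adj : L ⊣ R) [R.Full] [R.Faithful] [PreservesFiniteLimits L]
    [PreservesFiniteColimits L] [H.Additive] [HasProjectiveResolutions C]
    (h₀ : ∀ s, IsZero (L.obj s) → IsZero (H.obj s))
    (h₁ : ∀ s, IsZero (L.obj s) → IsZero ((H.leftDerived 1).obj s)) (X : C) :
    IsIso (H.map (adj.unit.app X)) :=
  H.isIso_map_of_isZero_obj_kernel_of_isZero_obj_cokernel _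
    (h₀ _ (L.isZero_obj_kernel_of_isIso_map _)) (h₀ _ (L.isZero_obj_cokernel_of_isIso_map _))
    (h₁ _ (L.isZero_obj_cokernel_of_isIso_map _))

end CategoryTheory

theorem stmt2_general
    -- 𝒜 is a Grothendieck abelian category with enough projectives
    (A : Type u) [Category.{v} A] [Abelian A] [EnoughProjectives A]
    -- 𝒜/𝒮 is a Grothendieck abelian category
    (QA : Type u) [Category.{v} QA] [Abelian QA]
    -- ℬ is a Grothendieck abelian category
    (B : Type u) [Category.{v} B] [Abelian B]
    -- ℬ/𝒯 is a Grothendieck abelian category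
    (QB : Type u) [Category.{v} QB] [Abelian QB]
    -- π : 𝒜 ⥤ 𝒜/𝒮 is a Gabriel localization: exact with fully faithful right adjoint ω
    (π : A ⥤ QA) [PreservesFiniteLimits π] [PreservesFiniteColimits π]
    (ω : QA ⥤ A) [ω.Full] [ω.Faithful] (adj : π ⊣ ω)
    -- π' : ℬ ⥤ ℬ/𝒯 is a Gabriel localization: exact with fully faithful right adjoint ω'
    (π' : B ⥤ QB) [π'.Additive] [PreservesFiniteColimits π']
    -- F is additive and right exact
    (F : A ⥤ B) [F.Additive] [PreservesFiniteColimits F]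
    -- π' ∘ F vanishes on the kernel of π
    (hker : ∀ s : A, IsZero (π.obj s) → IsZero (π'.obj (F.obj s)))
    -- L₁(π' ∘ F) vanishes on the kernel of π
    (hL1 : ∀ s : A, IsZero (π.obj s) → IsZero (((F ⋙ π').leftDerived 1).obj s))
    :
    Nonempty (PreservesFiniteColimits (ω ⋙ F ⋙ π')) := by
  have := adj.isIso_map_unit_app_of_isZero (F ⋙ π') hker hL1
  exact ⟨adj.preservesFiniteColimits_comp_of_isIso_map_unit (F ⋙ π')⟩

/-- Under the hypotheses of the lemma, `G := π' ∘ F ∘ ω` is right exact,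
i.e. preserves finite colimits. -/
theorem stmt2
    -- 𝒜 is a Grothendieck abelian category with enough projectives
    (A : Type u) [Category.{v} A] [Abelian A] [HasColimits A] [AB5 A] [HasSeparator A]
    [EnoughProjectives A]
    -- 𝒜/𝒮 is a Grothendieck abelian category
    (QA : Type u) [Category.{v} QA] [Abelian QA] [HasColimits QA] [AB5 QA] [HasSeparator QA]
    -- ℬ is a Grothendieck abelian category
    (B : Type u) [Category.{v} B] [Abelian B] [HasColimits B] [AB5 B] [HasSeparator B]
    -- ℬ/𝒯 is a Grothendieck abelian category
    (QB : Type u) [Category.{v} QB] [Abelian QB] [HasColimits QB] [AB5 QB] [HasSeparator QB]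
    -- π : 𝒜 ⥤ 𝒜/𝒮 is a Gabriel localization: exact with fully faithful right adjoint ω
    (π : A ⥤ QA) [π.Additive] [PreservesFiniteLimits π] [PreservesFiniteColimits π]
    (ω : QA ⥤ A) [ω.Full] [ω.Faithful] (adj : π ⊣ ω)
    -- π' : ℬ ⥤ ℬ/𝒯 is a Gabriel localization: exact with fully faithful right adjoint ω'
    (π' : B ⥤ QB) [π'.Additive] [PreservesFiniteLimits π'] [PreservesFiniteColimits π']
    (ω' : QB ⥤ B) [ω'.Full] [ω'.Faithful] (adj' : π' ⊣ ω')
    -- F is additive and right exact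
    (F : A ⥤ B) [F.Additive] [PreservesFiniteColimits F]
    -- π' ∘ F vanishes on the kernel of π
    (hker : ∀ s : A, IsZero (π.obj s) → IsZero (π'.obj (F.obj s)))
    -- L₁(π' ∘ F) vanishes on the kernel of π
    (hL1 : ∀ s : A, IsZero (π.obj s) → IsZero (((F ⋙ π').leftDerived 1).obj s))
    :
    Nonempty (PreservesFiniteColimits (ω ⋙ F ⋙ π')) :=
  stmt2_general A QA B QB π ω adj π' F hker hL1
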